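/- Under the rank condition, with Ȳ := [Y, X₁] and N₂ := I_T − M₁Y B₂: M₁(y − Yβ̂) = M̄[Ȳ]y = M₁M̄[M₁Y]y = M̄[M₁Y](M₁y); M(y − Yβ̂) = M·M̄[M₁Y](M₁y); N₁(y − Yβ̃) = M̄[N₁Y]·N₁y; and M₁(y − Yβ̃) = N₂(M₁y). -/

import Mathlib

open Matrix

variable {T G k₁ k₂ : ℕ}

/-- Orthogonal projection `P̄[A] = A(AᵀA)⁻¹Aᵀ` onto the column space of `A`. -/
noncomputable def projM {n : Type*} [Fintype n] [DecidableEq n]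
    (A : Matrix (Fin T) n ℝ) : Matrix (Fin T) (Fin T) ℝ :=
  A * (Aᵀ * A)⁻¹ * Aᵀ

/-- The annihilator `M̄[A] = I - P̄[A]`. -/
noncomputable def annM {n : Type*} [Fintype n] [DecidableEq n]
    (A : Matrix (Fin T) n ℝ) : Matrix (Fin T) (Fin T) ℝ :=
  1 - projM A

noncomputable def M1 (X₁ : Matrix (Fin T) (Fin k₁) ℝ) : Matrix (Fin T) (Fin T) ℝ :=
  annM X₁

noncomputable def Pm (X₁ : Matrix (Fin T) (Fin k₁) ℝ) (X₂ : Matrix (Fin T) (Fin k₂) ℝ) :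
    Matrix (Fin T) (Fin T) ℝ :=
  projM (fromCols X₁ X₂)

noncomputable def Mm (X₁ : Matrix (Fin T) (Fin k₁) ℝ) (X₂ : Matrix (Fin T) (Fin k₂) ℝ) :
    Matrix (Fin T) (Fin T) ℝ :=
  annM (fromCols X₁ X₂)

noncomputable def N1 (X₁ : Matrix (Fin T) (Fin k₁) ℝ) (X₂ : Matrix (Fin T) (Fin k₂) ℝ) :
    Matrix (Fin T) (Fin T) ℝ :=
  M1 X₁ * Pm X₁ X₂

noncomputable def B1 (Y : Matrix (Fin T) (Fin G) ℝ) (X₁ : Matrix (Fin T) (Fin k₁) ℝ) :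
    Matrix (Fin G) (Fin T) ℝ :=
  (Yᵀ * M1 X₁ * Y)⁻¹ * (Yᵀ * M1 X₁)

noncomputable def B2 (Y : Matrix (Fin T) (Fin G) ℝ) (X₁ : Matrix (Fin T) (Fin k₁) ℝ)
    (X₂ : Matrix (Fin T) (Fin k₂) ℝ) : Matrix (Fin G) (Fin T) ℝ :=
  (Yᵀ * N1 X₁ X₂ * Y)⁻¹ * (Yᵀ * N1 X₁ X₂)

noncomputable def C1 (Y : Matrix (Fin T) (Fin G) ℝ) (X₁ : Matrix (Fin T) (Fin k₁) ℝ)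
    (X₂ : Matrix (Fin T) (Fin k₂) ℝ) : Matrix (Fin G) (Fin T) ℝ :=
  B2 Y X₁ X₂ - B1 Y X₁

/-- OLS estimator `β̂`. -/
noncomputable def betaOLS (y : Fin T → ℝ) (Y : Matrix (Fin T) (Fin G) ℝ)
    (X₁ : Matrix (Fin T) (Fin k₁) ℝ) : Fin G → ℝ :=
  B1 Y X₁ *ᵥ y

/-- 2SLS estimator `β̃`. -/
noncomputable def beta2S (y : Fin T → ℝ) (Y : Matrix (Fin T) (Fin G) ℝ)
    (X₁ : Matrix (Fin T) (Fin k₁) ℝ) (X₂ : Matrix (Fin T) (Fin k₂) ℝ) : Fin G → ℝ :=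
  B2 Y X₁ X₂ *ᵥ y

noncomputable def OmIV (Y : Matrix (Fin T) (Fin G) ℝ) (X₁ : Matrix (Fin T) (Fin k₁) ℝ)
    (X₂ : Matrix (Fin T) (Fin k₂) ℝ) : Matrix (Fin G) (Fin G) ℝ :=
  (T : ℝ)⁻¹ • (Yᵀ * N1 X₁ X₂ * Y)

noncomputable def OmLS (Y : Matrix (Fin T) (Fin G) ℝ) (X₁ : Matrix (Fin T) (Fin k₁) ℝ) :
    Matrix (Fin G) (Fin G) ℝ :=
  (T : ℝ)⁻¹ • (Yᵀ * M1 X₁ * Y)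

noncomputable def SigV (Y : Matrix (Fin T) (Fin G) ℝ) (X₁ : Matrix (Fin T) (Fin k₁) ℝ)
    (X₂ : Matrix (Fin T) (Fin k₂) ℝ) : Matrix (Fin G) (Fin G) ℝ :=
  (T : ℝ)⁻¹ • (Yᵀ * Mm X₁ X₂ * Y)

noncomputable def Dhat (Y : Matrix (Fin T) (Fin G) ℝ) (X₁ : Matrix (Fin T) (Fin k₁) ℝ)
    (X₂ : Matrix (Fin T) (Fin k₂) ℝ) : Matrix (Fin G) (Fin G) ℝ :=
  (OmIV Y X₁ X₂)⁻¹ - (OmLS Y X₁)⁻¹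

noncomputable def Psi0 (Y : Matrix (Fin T) (Fin G) ℝ) (X₁ : Matrix (Fin T) (Fin k₁) ℝ)
    (X₂ : Matrix (Fin T) (Fin k₂) ℝ) : Matrix (Fin T) (Fin T) ℝ :=
  (C1 Y X₁ X₂)ᵀ * (Dhat Y X₁ X₂)⁻¹ * C1 Y X₁ X₂

noncomputable def N2 (Y : Matrix (Fin T) (Fin G) ℝ) (X₁ : Matrix (Fin T) (Fin k₁) ℝ)
    (X₂ : Matrix (Fin T) (Fin k₂) ℝ) : Matrix (Fin T) (Fin T) ℝ :=
  1 - M1 X₁ * Y * B2 Y X₁ X₂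

noncomputable def Lam1 (Y : Matrix (Fin T) (Fin G) ℝ) (X₁ : Matrix (Fin T) (Fin k₁) ℝ)
    (X₂ : Matrix (Fin T) (Fin k₂) ℝ) : Matrix (Fin T) (Fin T) ℝ :=
  (T : ℝ)⁻¹ • (N1 X₁ X₂ * annM (N1 X₁ X₂ * Y) * N1 X₁ X₂)

noncomputable def Lam2 (Y : Matrix (Fin T) (Fin G) ℝ) (X₁ : Matrix (Fin T) (Fin k₁) ℝ)
    (X₂ : Matrix (Fin T) (Fin k₂) ℝ) : Matrix (Fin T) (Fin T) ℝ :=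
  M1 X₁ * ((T : ℝ)⁻¹ • annM (M1 X₁ * Y) - Psi0 Y X₁ X₂) * M1 X₁

noncomputable def Lam3 (Y : Matrix (Fin T) (Fin G) ℝ) (X₁ : Matrix (Fin T) (Fin k₁) ℝ)
    (X₂ : Matrix (Fin T) (Fin k₂) ℝ) : Matrix (Fin T) (Fin T) ℝ :=
  (T : ℝ)⁻¹ • (M1 X₁ * (N2 Y X₁ X₂)ᵀ * N2 Y X₁ X₂ * M1 X₁)

noncomputable def Lam4 (Y : Matrix (Fin T) (Fin G) ℝ) (X₁ : Matrix (Fin T) (Fin k₁) ℝ) :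
    Matrix (Fin T) (Fin T) ℝ :=
  (T : ℝ)⁻¹ • (M1 X₁ * annM (M1 X₁ * Y) * M1 X₁)

def Ybar (Y : Matrix (Fin T) (Fin G) ℝ) (X₁ : Matrix (Fin T) (Fin k₁) ℝ) :
    Matrix (Fin T) (Fin G ⊕ Fin k₁) ℝ :=
  fromCols Y X₁

def Zfull (Y : Matrix (Fin T) (Fin G) ℝ) (X₁ : Matrix (Fin T) (Fin k₁) ℝ)
    (X₂ : Matrix (Fin T) (Fin k₂) ℝ) : Matrix (Fin T) (Fin G ⊕ (Fin k₁ ⊕ Fin k₂)) ℝ :=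
  fromCols Y (fromCols X₁ X₂)

noncomputable def PsiR (Y : Matrix (Fin T) (Fin G) ℝ) (X₁ : Matrix (Fin T) (Fin k₁) ℝ)
    (X₂ : Matrix (Fin T) (Fin k₂) ℝ) : Matrix (Fin T) (Fin T) ℝ :=
  (T : ℝ)⁻¹ • (annM (Ybar Y X₁) - annM (Zfull Y X₁ X₂))

noncomputable def LamR (Y : Matrix (Fin T) (Fin G) ℝ) (X₁ : Matrix (Fin T) (Fin k₁) ℝ)
    (X₂ : Matrix (Fin T) (Fin k₂) ℝ) : Matrix (Fin T) (Fin T) ℝ :=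
  (T : ℝ)⁻¹ • annM (Zfull Y X₁ X₂)

/-- `σ̂² = (1/T)(y−Yβ̂)ᵀM₁(y−Yβ̂)`. -/
noncomputable def sigHat2 (y : Fin T → ℝ) (Y : Matrix (Fin T) (Fin G) ℝ)
    (X₁ : Matrix (Fin T) (Fin k₁) ℝ) : ℝ :=
  (T : ℝ)⁻¹ * ((y - Y *ᵥ betaOLS y Y X₁) ⬝ᵥ (M1 X₁ *ᵥ (y - Y *ᵥ betaOLS y Y X₁)))

/-- `σ̃² = (1/T)(y−Yβ̃)ᵀM₁(y−Yβ̃)`. -/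
noncomputable def sigTil2 (y : Fin T → ℝ) (Y : Matrix (Fin T) (Fin G) ℝ)
    (X₁ : Matrix (Fin T) (Fin k₁) ℝ) (X₂ : Matrix (Fin T) (Fin k₂) ℝ) : ℝ :=
  (T : ℝ)⁻¹ * ((y - Y *ᵥ beta2S y Y X₁ X₂) ⬝ᵥ (M1 X₁ *ᵥ (y - Y *ᵥ beta2S y Y X₁ X₂)))

/-- `σ̃₁² = (1/T)(y−Yβ̃)ᵀN₁(y−Yβ̃)`. -/
noncomputable def sigTil1sq (y : Fin T → ℝ) (Y : Matrix (Fin T) (Fin G) ℝ)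
    (X₁ : Matrix (Fin T) (Fin k₁) ℝ) (X₂ : Matrix (Fin T) (Fin k₂) ℝ) : ℝ :=
  (T : ℝ)⁻¹ * ((y - Y *ᵥ beta2S y Y X₁ X₂) ⬝ᵥ (N1 X₁ X₂ *ᵥ (y - Y *ᵥ beta2S y Y X₁ X₂)))

/-- `σ̃₂² = σ̂² − (β̃−β̂)ᵀΔ̂⁻¹(β̃−β̂)`. -/
noncomputable def sigTil2sq (y : Fin T → ℝ) (Y : Matrix (Fin T) (Fin G) ℝ)
    (X₁ : Matrix (Fin T) (Fin k₁) ℝ) (X₂ : Matrix (Fin T) (Fin k₂) ℝ) : ℝ :=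
  sigHat2 y Y X₁ -
    (beta2S y Y X₁ X₂ - betaOLS y Y X₁) ⬝ᵥ
      ((Dhat Y X₁ X₂)⁻¹ *ᵥ (beta2S y Y X₁ X₂ - betaOLS y Y X₁))

/-- The rank condition: `X₁`, `X = [X₁, X₂]`, `[Y, X]` and `[P̄[X]Y, X₁]` all have
full column rank. -/
def RankCond (Y : Matrix (Fin T) (Fin G) ℝ) (X₁ : Matrix (Fin T) (Fin k₁) ℝ)
    (X₂ : Matrix (Fin T) (Fin k₂) ℝ) : Prop :=
  X₁.rank = k₁ ∧ (fromCols X₁ X₂).rank = k₁ + k₂ ∧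
    (fromCols Y (fromCols X₁ X₂)).rank = G + (k₁ + k₂) ∧
    (fromCols (Pm X₁ X₂ * Y) X₁).rank = G + k₁

/-!
For a symmetric idempotent `W`, the residual maker of `WY` commutes with `W` and
`W M̄[WY] = M̄[WY] W = W − WY(YᵀWY)⁻¹YᵀW`; with `W = M₁` and `W = N₁` this turns the OLS and
2SLS residuals into the stated forms. The identity `M̄[[Y, X₁]] = M₁ − M₁YB₁` is the
Frisch–Waugh–Lovell theorem: `P̄[X₁] + M₁YB₁` fixes the columns of `[Y, X₁]` and factors through
`[Y, X₁]ᵀ`, which characterises `P̄[[Y, X₁]]`. The remaining identities follow from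
`P̄[X] P̄[X₁] = P̄[X₁]`, which gives `M M₁ = M`, `N₁ = P̄[X] − P̄[X₁]` and `N₁ M₁ = N₁`.
-/

section Projection

variable {T : ℕ} {n m : Type*} [Fintype n] [Fintype m]

lemma mulVec_injective_of_rank_eq_card {A : Matrix (Fin T) n ℝ} (h : A.rank = Fintype.card n) :
    Function.Injective A.mulVec :=
  mulVec_injective_iff.mpr <| linearIndependent_iff_card_eq_finrank_span.mpr <|
    h.symm.trans A.rank_eq_finrank_span_cols

lemma mulVec_injective_fromCols_of_fromCols_fromCols {l : Type*} [Fintype l]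
    {Y : Matrix (Fin T) l ℝ} {X : Matrix (Fin T) n ℝ} {X' : Matrix (Fin T) m ℝ}
    (h : Function.Injective (fromCols Y (fromCols X X')).mulVec) :
    Function.Injective (fromCols Y X).mulVec := by
  have hcol : (fromCols Y X).col = (fromCols Y (fromCols X X')).col ∘ Sum.map id Sum.inl := by
    ext (j | j) i <;> rfl
  rw [mulVec_injective_iff, hcol]
  exact (mulVec_injective_iff.mp h).comp _
    (Sum.map_injective.mpr ⟨Function.injective_id, Sum.inl_injective⟩)

variable [DecidableEq n] [DecidableEq m]

lemma isUnit_transpose_mul_self_of_injective {A : Matrix (Fin T) n ℝ}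
    (h : Function.Injective A.mulVec) : IsUnit (Aᵀ * A) := by
  rw [← mulVec_injective_iff_isUnit, ← coe_mulVecLin, ← LinearMap.ker_eq_bot,
    ker_mulVecLin_transpose_mul_self, LinearMap.ker_eq_bot, coe_mulVecLin]
  exact h

lemma transpose_projM (A : Matrix (Fin T) n ℝ) : (projM A)ᵀ = projM A := by
  simp [projM, transpose_nonsing_inv, Matrix.mul_assoc]

lemma projM_mul_self {A : Matrix (Fin T) n ℝ} (hA : IsUnit (Aᵀ * A)) : projM A * A = A := by
  rw [projM, Matrix.mul_assoc, Matrix.mul_assoc,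
    nonsing_inv_mul _ ((isUnit_iff_isUnit_det _).mp hA), Matrix.mul_one]

lemma isIdempotentElem_projM {A : Matrix (Fin T) n ℝ} (hA : IsUnit (Aᵀ * A)) :
    IsIdempotentElem (projM A) := by
  rw [IsIdempotentElem]
  nth_rw 2 [projM.eq_1 A]
  rw [← Matrix.mul_assoc, ← Matrix.mul_assoc, projM_mul_self hA, projM]

lemma annM_mul_self {A : Matrix (Fin T) n ℝ} (hA : IsUnit (Aᵀ * A)) : annM A * A = 0 := by
  rw [annM, Matrix.sub_mul, Matrix.one_mul, projM_mul_self hA, sub_self]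

lemma isSymm_annM (A : Matrix (Fin T) n ℝ) : (annM A).IsSymm := by
  rw [IsSymm, annM, transpose_sub, transpose_one, transpose_projM]

lemma isIdempotentElem_annM {A : Matrix (Fin T) n ℝ} (hA : IsUnit (Aᵀ * A)) :
    IsIdempotentElem (annM A) :=
  (isIdempotentElem_projM hA).one_sub

lemma projM_mul_projM_eq_right {A : Matrix (Fin T) n ℝ} {B : Matrix (Fin T) m ℝ}
    (h : projM B * A = A) : projM B * projM A = projM A := by
  rw [projM.eq_1 A, ← Matrix.mul_assoc, ← Matrix.mul_assoc, h]

lemma projM_mul_projM_eq_left {A : Matrix (Fin T) n ℝ} {B : Matrix (Fin T) m ℝ}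
    (h : projM B * A = A) : projM A * projM B = projM A := by
  simpa only [transpose_mul, transpose_projM] using
    congrArg transpose (projM_mul_projM_eq_right h)

lemma projM_fromCols_mul_left {A : Matrix (Fin T) n ℝ} {B : Matrix (Fin T) m ℝ}
    (h : IsUnit ((fromCols A B)ᵀ * fromCols A B)) : projM (fromCols A B) * A = A := by
  have hAB := projM_mul_self h
  rw [mul_fromCols] at hAB
  exact (fromCols_inj hAB).1

lemma eq_projM_of_mul_eq {A : Matrix (Fin T) n ℝ} (hA : IsUnit (Aᵀ * A))
    {Q : Matrix (Fin T) (Fin T) ℝ} {S : Matrix (Fin T) n ℝ} (hQA : Q * A = A) (hQ : Q = S * Aᵀ) :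
    Q = projM A :=
  calc Q = S * (Aᵀ * projM A) := by
        rw [hQ, projM, ← Matrix.mul_assoc Aᵀ, ← Matrix.mul_assoc Aᵀ,
          mul_nonsing_inv _ ((isUnit_iff_isUnit_det _).mp hA), Matrix.one_mul]
    _ = Q * projM A := by rw [hQ, Matrix.mul_assoc]
    _ = projM A := by rw [projM.eq_1 A, ← Matrix.mul_assoc, ← Matrix.mul_assoc, hQA]

end Projection

section LeastSquares

variable {T : ℕ} {n p : Type*}

lemma transpose_mul_mul_self_eq {W : Matrix (Fin T) (Fin T) ℝ} (hWs : W.IsSymm)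
    (hWi : IsIdempotentElem W) (Y : Matrix (Fin T) p ℝ) :
    (W * Y)ᵀ * (W * Y) = Yᵀ * W * Y := by
  rw [transpose_mul, hWs.eq, Matrix.mul_assoc, ← Matrix.mul_assoc W, hWi.eq, Matrix.mul_assoc]

variable [Fintype n] [Fintype p]

lemma mulVec_sub_mulVec_mulVec (W : Matrix (Fin T) (Fin T) ℝ) (Y : Matrix (Fin T) p ℝ)
    (B : Matrix p (Fin T) ℝ) (y : Fin T → ℝ) :
    W *ᵥ (y - Y *ᵥ (B *ᵥ y)) = (W - W * Y * B) *ᵥ y := by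
  simp only [mulVec_sub, sub_mulVec, mulVec_mulVec, Matrix.mul_assoc]

variable [DecidableEq n]

lemma mulVec_injective_annM_mul {Y : Matrix (Fin T) p ℝ} {X : Matrix (Fin T) n ℝ}
    (h : Function.Injective (fromCols Y X).mulVec) : Function.Injective (annM X * Y).mulVec := by
  rw [← coe_mulVecLin, injective_iff_map_eq_zero]
  intro v hv
  set w := ((Xᵀ * X)⁻¹ * Xᵀ * Y) *ᵥ v
  have hYX : Y *ᵥ v = X *ᵥ w := by
    rw [mulVecLin_apply, annM, Matrix.sub_mul, Matrix.one_mul, sub_mulVec, sub_eq_zero] at hv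
    rw [hv, projM, mulVec_mulVec]
    simp only [Matrix.mul_assoc]
  have h0 : fromCols Y X *ᵥ Sum.elim v (-w) = fromCols Y X *ᵥ 0 := by
    rw [fromCols_mulVec_sumElim, mulVec_neg, hYX, add_neg_cancel, mulVec_zero]
  simpa using congrArg (fun u => u ∘ Sum.inl) (h h0)

variable [DecidableEq p]

/-- `B1 Y X₁` and `B2 Y X₁ X₂` are `wlsCoef (M1 X₁) Y` and `wlsCoef (N1 X₁ X₂) Y` by definition. -/
noncomputable def wlsCoef (W : Matrix (Fin T) (Fin T) ℝ) (Y : Matrix (Fin T) p ℝ) :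
    Matrix p (Fin T) ℝ :=
  (Yᵀ * W * Y)⁻¹ * (Yᵀ * W)

lemma mul_annM_mul_eq {W : Matrix (Fin T) (Fin T) ℝ} (hWs : W.IsSymm) (hWi : IsIdempotentElem W)
    (Y : Matrix (Fin T) p ℝ) : W * annM (W * Y) = W - W * Y * wlsCoef W Y := by
  rw [annM, projM, transpose_mul_mul_self_eq hWs hWi, transpose_mul, hWs.eq, Matrix.mul_sub,
    Matrix.mul_one, wlsCoef]
  simp only [← Matrix.mul_assoc, hWi.eq]

lemma annM_mul_mul_eq {W : Matrix (Fin T) (Fin T) ℝ} (hWs : W.IsSymm) (hWi : IsIdempotentElem W)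
    (Y : Matrix (Fin T) p ℝ) : annM (W * Y) * W = W - W * Y * wlsCoef W Y := by
  rw [annM, projM, transpose_mul_mul_self_eq hWs hWi, transpose_mul, hWs.eq, Matrix.sub_mul,
    Matrix.one_mul, wlsCoef]
  simp only [Matrix.mul_assoc, hWi.eq]

end LeastSquares

section FrischWaughLovell

variable {T : ℕ} {n p : Type*} [Fintype n] [DecidableEq n] [Fintype p] [DecidableEq p]

theorem projM_fromCols_eq {Y : Matrix (Fin T) p ℝ} {X : Matrix (Fin T) n ℝ}
    (h : Function.Injective (fromCols Y X).mulVec) :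
    projM (fromCols Y X) = projM X + annM X * Y * wlsCoef (annM X) Y := by
  have hX : Function.Injective X.mulVec :=
    mulVec_injective_iff.mpr ((mulVec_injective_iff.mp h).comp Sum.inr Sum.inr_injective)
  have hXu := isUnit_transpose_mul_self_of_injective hX
  have hC : IsUnit (Yᵀ * annM X * Y) := by
    rw [← transpose_mul_mul_self_eq (isSymm_annM X) (isIdempotentElem_annM hXu)]
    exact isUnit_transpose_mul_self_of_injective (mulVec_injective_annM_mul h)
  symm
  refine eq_projM_of_mul_eq (isUnit_transpose_mul_self_of_injective h)
    (S := fromCols (annM X * Y * (Yᵀ * annM X * Y)⁻¹)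
      (X * (Xᵀ * X)⁻¹ - annM X * Y * (Yᵀ * annM X * Y)⁻¹ * (Yᵀ * X * (Xᵀ * X)⁻¹))) ?_ ?_
  · have hCY : wlsCoef (annM X) Y * Y = 1 := by
      rw [wlsCoef, Matrix.mul_assoc, nonsing_inv_mul _ ((isUnit_iff_isUnit_det _).mp hC)]
    have hCX : wlsCoef (annM X) Y * X = 0 := by
      rw [wlsCoef, Matrix.mul_assoc _ (Yᵀ * annM X), Matrix.mul_assoc Yᵀ (annM X) X,
        annM_mul_self hXu, Matrix.mul_zero, Matrix.mul_zero]
    rw [mul_fromCols, Matrix.add_mul, Matrix.add_mul, Matrix.mul_assoc _ _ Y, hCY,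
      Matrix.mul_assoc _ _ X, hCX, Matrix.mul_one, Matrix.mul_zero, add_zero, projM_mul_self hXu,
      annM, Matrix.sub_mul, Matrix.one_mul, add_sub_cancel]
  · rw [transpose_fromCols, fromCols_mul_fromRows]
    simp only [wlsCoef, annM, projM, Matrix.mul_sub, Matrix.sub_mul, Matrix.mul_one,
      Matrix.mul_assoc]
    abel

theorem annM_fromCols_eq {Y : Matrix (Fin T) p ℝ} {X : Matrix (Fin T) n ℝ}
    (h : Function.Injective (fromCols Y X).mulVec) :
    annM (fromCols Y X) = annM X - annM X * Y * wlsCoef (annM X) Y := by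
  rw [annM, projM_fromCols_eq h, annM, sub_add_eq_sub_sub]

end FrischWaughLovell

section Regression

variable {T G k₁ k₂ : ℕ} {X₁ : Matrix (Fin T) (Fin k₁) ℝ} {X₂ : Matrix (Fin T) (Fin k₂) ℝ}

lemma Pm_mul_projM (hX : IsUnit ((fromCols X₁ X₂)ᵀ * fromCols X₁ X₂)) :
    Pm X₁ X₂ * projM X₁ = projM X₁ :=
  projM_mul_projM_eq_right (projM_fromCols_mul_left hX)

lemma projM_mul_Pm (hX : IsUnit ((fromCols X₁ X₂)ᵀ * fromCols X₁ X₂)) :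
    projM X₁ * Pm X₁ X₂ = projM X₁ :=
  projM_mul_projM_eq_left (projM_fromCols_mul_left hX)

lemma Mm_mul_M1 (hX : IsUnit ((fromCols X₁ X₂)ᵀ * fromCols X₁ X₂)) :
    Mm X₁ X₂ * M1 X₁ = Mm X₁ X₂ := by
  rw [Mm, M1, annM, annM, ← Pm.eq_1, Matrix.mul_sub, Matrix.mul_one, Matrix.sub_mul,
    Matrix.one_mul, Pm_mul_projM hX, sub_self, sub_zero]

lemma N1_eq_sub (hX : IsUnit ((fromCols X₁ X₂)ᵀ * fromCols X₁ X₂)) :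
    N1 X₁ X₂ = Pm X₁ X₂ - projM X₁ := by
  rw [N1, M1, annM, Matrix.sub_mul, Matrix.one_mul, projM_mul_Pm hX]

lemma isSymm_N1 (hX : IsUnit ((fromCols X₁ X₂)ᵀ * fromCols X₁ X₂)) : (N1 X₁ X₂).IsSymm := by
  rw [IsSymm, N1_eq_sub hX, transpose_sub, Pm, transpose_projM, transpose_projM]

lemma isIdempotentElem_N1 (hX₁ : IsUnit (X₁ᵀ * X₁))
    (hX : IsUnit ((fromCols X₁ X₂)ᵀ * fromCols X₁ X₂)) : IsIdempotentElem (N1 X₁ X₂) := by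
  rw [IsIdempotentElem, N1_eq_sub hX, Matrix.mul_sub, Matrix.sub_mul, Matrix.sub_mul,
    Pm_mul_projM hX, projM_mul_Pm hX, Pm, (isIdempotentElem_projM hX).eq,
    (isIdempotentElem_projM hX₁).eq]
  abel

lemma N1_mul_M1 (hX₁ : IsUnit (X₁ᵀ * X₁)) (hX : IsUnit ((fromCols X₁ X₂)ᵀ * fromCols X₁ X₂)) :
    N1 X₁ X₂ * M1 X₁ = N1 X₁ X₂ := by
  rw [N1_eq_sub hX, M1, annM, Matrix.mul_sub, Matrix.mul_one, Matrix.sub_mul, Pm_mul_projM hX,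
    (isIdempotentElem_projM hX₁).eq, sub_self, sub_zero]

lemma B2_mul_M1 (Y : Matrix (Fin T) (Fin G) ℝ) (hX₁ : IsUnit (X₁ᵀ * X₁))
    (hX : IsUnit ((fromCols X₁ X₂)ᵀ * fromCols X₁ X₂)) : B2 Y X₁ X₂ * M1 X₁ = B2 Y X₁ X₂ := by
  rw [B2, Matrix.mul_assoc, Matrix.mul_assoc Yᵀ (N1 X₁ X₂) (M1 X₁), N1_mul_M1 hX₁ hX]

end Regression

theorem stmt7_general {T G k₁ k₂ : ℕ}
    (y : Fin T → ℝ) (Y : Matrix (Fin T) (Fin G) ℝ)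
    (X₁ : Matrix (Fin T) (Fin k₁) ℝ) (X₂ : Matrix (Fin T) (Fin k₂) ℝ)
    (hrank : RankCond Y X₁ X₂) :
    M1 X₁ *ᵥ (y - Y *ᵥ betaOLS y Y X₁) = annM (Ybar Y X₁) *ᵥ y ∧
    M1 X₁ *ᵥ (y - Y *ᵥ betaOLS y Y X₁) = (M1 X₁ * annM (M1 X₁ * Y)) *ᵥ y ∧
    M1 X₁ *ᵥ (y - Y *ᵥ betaOLS y Y X₁) = annM (M1 X₁ * Y) *ᵥ (M1 X₁ *ᵥ y) ∧
    Mm X₁ X₂ *ᵥ (y - Y *ᵥ betaOLS y Y X₁)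
      = (Mm X₁ X₂ * annM (M1 X₁ * Y)) *ᵥ (M1 X₁ *ᵥ y) ∧
    N1 X₁ X₂ *ᵥ (y - Y *ᵥ beta2S y Y X₁ X₂)
      = annM (N1 X₁ X₂ * Y) *ᵥ (N1 X₁ X₂ *ᵥ y) ∧
    M1 X₁ *ᵥ (y - Y *ᵥ beta2S y Y X₁ X₂) = N2 Y X₁ X₂ *ᵥ (M1 X₁ *ᵥ y) := by
  obtain ⟨h₁, h₂, h₃, -⟩ := hrank
  have hX₁ : IsUnit (X₁ᵀ * X₁) := isUnit_transpose_mul_self_of_injective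
    (mulVec_injective_of_rank_eq_card (by simpa using h₁))
  have hX : IsUnit ((fromCols X₁ X₂)ᵀ * fromCols X₁ X₂) := isUnit_transpose_mul_self_of_injective
    (mulVec_injective_of_rank_eq_card (by simpa using h₂))
  have hYbar : Function.Injective (Ybar Y X₁).mulVec :=
    mulVec_injective_fromCols_of_fromCols_fromCols (X' := X₂)
      (mulVec_injective_of_rank_eq_card (by simpa using h₃))
  have hM₁s := isSymm_annM X₁
  have hM₁i := isIdempotentElem_annM hX₁
  have hOLS : M1 X₁ *ᵥ (y - Y *ᵥ betaOLS y Y X₁) = annM (M1 X₁ * Y) *ᵥ (M1 X₁ *ᵥ y) := by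
    rw [betaOLS, mulVec_sub_mulVec_mulVec, mulVec_mulVec, M1, annM_mul_mul_eq hM₁s hM₁i]
    rfl
  refine ⟨?_, ?_, hOLS, ?_, ?_, ?_⟩
  · rw [betaOLS, mulVec_sub_mulVec_mulVec, Ybar, annM_fromCols_eq hYbar]
    rfl
  · rw [betaOLS, mulVec_sub_mulVec_mulVec, M1, mul_annM_mul_eq hM₁s hM₁i]
    rfl
  · rw [← mulVec_mulVec, ← hOLS, mulVec_mulVec, Mm_mul_M1 hX]
  · rw [beta2S, mulVec_sub_mulVec_mulVec, mulVec_mulVec,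
      annM_mul_mul_eq (isSymm_N1 hX) (isIdempotentElem_N1 hX₁ hX)]
    rfl
  · rw [beta2S, mulVec_sub_mulVec_mulVec, mulVec_mulVec, N2, Matrix.sub_mul, Matrix.one_mul,
      Matrix.mul_assoc _ (B2 Y X₁ X₂), B2_mul_M1 Y hX₁ hX]

/-- Under the rank condition, with `Ȳ = [Y, X₁]` and `N₂ = I_T − M₁YB₂`:
`M₁(y − Yβ̂) = M̄[Ȳ]y = M₁M̄[M₁Y]y = M̄[M₁Y](M₁y)`;
`M(y − Yβ̂) = M·M̄[M₁Y](M₁y)`; `N₁(y − Yβ̃) = M̄[N₁Y]·N₁y`; and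
`M₁(y − Yβ̃) = N₂(M₁y)`. -/
theorem stmt7 {T G k₁ k₂ : ℕ}
    (hT : 0 < T) (hG : 0 < G) (hk₁ : 0 < k₁) (hk₂ : 0 < k₂)
    (y : Fin T → ℝ) (Y : Matrix (Fin T) (Fin G) ℝ)
    (X₁ : Matrix (Fin T) (Fin k₁) ℝ) (X₂ : Matrix (Fin T) (Fin k₂) ℝ)
    (hrank : RankCond Y X₁ X₂) :
    M1 X₁ *ᵥ (y - Y *ᵥ betaOLS y Y X₁) = annM (Ybar Y X₁) *ᵥ y ∧
    M1 X₁ *ᵥ (y - Y *ᵥ betaOLS y Y X₁) = (M1 X₁ * annM (M1 X₁ * Y)) *ᵥ y ∧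
    M1 X₁ *ᵥ (y - Y *ᵥ betaOLS y Y X₁) = annM (M1 X₁ * Y) *ᵥ (M1 X₁ *ᵥ y) ∧
    Mm X₁ X₂ *ᵥ (y - Y *ᵥ betaOLS y Y X₁)
      = (Mm X₁ X₂ * annM (M1 X₁ * Y)) *ᵥ (M1 X₁ *ᵥ y) ∧
    N1 X₁ X₂ *ᵥ (y - Y *ᵥ beta2S y Y X₁ X₂)
      = annM (N1 X₁ X₂ * Y) *ᵥ (N1 X₁ X₂ *ᵥ y) ∧
    M1 X₁ *ᵥ (y - Y *ᵥ beta2S y Y X₁ X₂) = N2 Y X₁ X₂ *ᵥ (M1 X₁ *ᵥ y) :=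
  stmt7_general y Y X₁ X₂ hrank
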